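/- arXiv:2306.01790 — 3 statements merged into one kernel-verified Lean document; each statement's English description precedes it below -/
import Mathlib

section
/- Let I be an index type with at least two elements, and for each i ∈ I let S i be a compact preregular (R1) topological space. Fix i ∈ I and let BR_i : (∀ j ≠ i, S j) → Set (S i) be a closed-valued, upper hemicontinuous correspondence (for every open V ⊆ S i, the set of profiles s_{-i} with BR_i(s_{-i}) ⊆ V is open in the product topology on ∏_{j ≠ i} S j). Then the set Γ_i = {s ∈ ∏_{j ∈ I} S j : s i ∈ BR_i(s restricted to coordinates j ≠ i)} is closed in the product space ∏_{j ∈ I} S j (with the product topology). -/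
/-- For compact preregular strategy spaces and a closed-valued, upper
hemicontinuous best-response correspondence `BR_i`, the set
`Γ_i = {s | s i ∈ BR_i (s restricted to j ≠ i)}` is closed in the product. -/
theorem graph_closed_in_product {I : Type*} [Nontrivial I] (S : I → Type*)
    [∀ i, TopologicalSpace (S i)] [∀ i, CompactSpace (S i)] [∀ i, R1Space (S i)]
    (i : I) (BR : (∀ j : {j : I // j ≠ i}, S j) → Set (S i))
    (hclosed : ∀ p, IsClosed (BR p))
    (huhc : ∀ V : Set (S i), IsOpen V →
      IsOpen {p : ∀ j : {j : I // j ≠ i}, S j | BR p ⊆ V}) :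
    IsClosed {s : ∀ j, S j | s i ∈ BR (fun j => s j.1)} := by
  rw [← isOpen_compl_iff]
  rw [isOpen_iff_forall_mem_open]
  intro s hs
  simp only [Set.mem_compl_iff, Set.mem_setOf_eq] at hs
  set p : ∀ j : {j : I // j ≠ i}, S j := fun j => s j.1 with hp
  have hsep : SeparatedNhds ({s i} : Set (S i)) (BR p) :=
    SeparatedNhds.of_isCompact_isCompact_isClosed isCompact_singleton
      ((hclosed p).isCompact) (hclosed p)
      (Set.disjoint_singleton_left.mpr hs)
  obtain ⟨U, V, hU, hV, hsU, hBRV, hUV⟩ := hsep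
  have hres : Continuous fun (t : ∀ j, S j) => (fun j : {j : I // j ≠ i} => t j.1) :=
    continuous_pi fun j => continuous_apply j.1
  refine ⟨{t : ∀ j, S j | t i ∈ U} ∩ {t | BR (fun j => t j.1) ⊆ V}, ?_, ?_, ?_⟩
  · intro t ht
    simp only [Set.mem_inter_iff, Set.mem_setOf_eq] at ht
    simp only [Set.mem_compl_iff, Set.mem_setOf_eq]
    intro hmem
    exact (hUV.le_bot ⟨ht.1, ht.2 hmem⟩)
  · exact ((hU.preimage (continuous_apply i)).inter
      ((huhc V hV).preimage hres))
  · exact ⟨hsU rfl, hBRV⟩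
end

section
/- Consider a game with index set I, nonempty strategy spaces S i, and best-response correspondences BR_i : ∏_{j ≠ i} S j → Set (S i). Suppose that every finite reduction of the game has a pure-strategy Nash equilibrium: for every finite subset J ⊆ I and every point p ∈ ∏_{i ∉ J} S i, there exists t ∈ ∏_{i ∈ J} S i such that for every i ∈ J, t i ∈ BR_i applied to the profile combining p on J^c \ {i} and t on J \ {i}. Then for every nonempty finite subset J ⊆ I, the intersection ⋂_{i ∈ J} Γ_i is nonempty, where Γ_i = {s ∈ ∏_{j ∈ I} S j : s i ∈ BR_i(s_{-i})}. -/
open scoped Classical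

/-- If every finite reduction of a game has a pure-strategy Nash equilibrium,
then for every nonempty finite set `J` of players the intersection of the
graphs `Γ_i`, `i ∈ J`, is nonempty. -/
theorem finite_inter_graphs_nonempty {I : Type*} [Nontrivial I] (S : I → Type*)
    (hne : ∀ i, Nonempty (S i))
    (BR : ∀ i : I, (∀ j : {j : I // j ≠ i}, S j) → Set (S i))
    (hfin : ∀ (J : Finset I) (p : ∀ j : {j : I // j ∉ J}, S j),
      ∃ t : ∀ j : J, S j, ∀ i : J,
        t i ∈ BR i.1 (fun j => if h : j.1 ∈ J then t ⟨j.1, h⟩ else p ⟨j.1, h⟩)) :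
    ∀ J : Finset I, J.Nonempty →
      (⋂ i ∈ J, {s : ∀ j, S j | s i ∈ BR i (fun j => s j.1)}).Nonempty := by
  intro J hJ
  obtain ⟨t, ht⟩ := hfin J (fun j => Classical.choice (hne j))
  refine ⟨fun j => if h : j ∈ J then t ⟨j, h⟩ else Classical.choice (hne j), ?_⟩
  simp only [Set.mem_iInter, Set.mem_setOf_eq]
  intro i hi
  have := ht ⟨i, hi⟩
  simpa [dif_pos hi] using this
end

section
/- Every well-specified game has a pure-strategy Nash equilibrium. That is: let I be an index set with at least two elements, and for each i ∈ I let S i be a nonempty, compact, preregular (R1) topological space; let BR_i : ∏_{j ≠ i} S j → Set (S i) be closed-valued and upper hemicontinuous (for every open V ⊆ S i, the set {s_{-i} : BR_i(s_{-i}) ⊆ V} is open in the product topology); and suppose every finite reduction of the game has a pure-strategy Nash equilibrium, i.e., for every finite J ⊆ I and every p ∈ ∏_{i ∉ J} S i there exists t ∈ ∏_{i ∈ J} S i with t i ∈ BR_i(p, t_{-i}) for all i ∈ J. Then there exists s ∈ ∏_{i ∈ I} S i such that s i ∈ BR_i(s_{-i}) for every i ∈ I. -/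
open scoped Classical

/-- Every well-specified game has a pure-strategy Nash equilibrium. -/
theorem well_specified_game_has_equilibrium {I : Type*} [Nontrivial I] (S : I → Type*)
    [∀ i, TopologicalSpace (S i)] [∀ i, CompactSpace (S i)] [∀ i, R1Space (S i)]
    (hne : ∀ i, Nonempty (S i))
    (BR : ∀ i : I, (∀ j : {j : I // j ≠ i}, S j) → Set (S i))
    (hclosed : ∀ i p, IsClosed (BR i p))
    (huhc : ∀ i (V : Set (S i)), IsOpen V →
      IsOpen {p : ∀ j : {j : I // j ≠ i}, S j | BR i p ⊆ V})
    (hfin : ∀ (J : Finset I) (p : ∀ j : {j : I // j ∉ J}, S j),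
      ∃ t : ∀ j : J, S j, ∀ i : J,
        t i ∈ BR i.1 (fun j => if h : j.1 ∈ J then t ⟨j.1, h⟩ else p ⟨j.1, h⟩)) :
    ∃ s : ∀ i, S i, ∀ i, s i ∈ BR i (fun j => s j.1) := by
  haveI : ∀ i, Nonempty (S i) := hne
  -- the closed set of profiles where player i best-responds
  set C : I → Set (∀ i, S i) := fun i => {s | s i ∈ BR i (fun j => s j.1)} with hC
  have hCclosed : ∀ i, IsClosed (C i) := by
    intro i
    rw [← isOpen_compl_iff, isOpen_iff_forall_mem_open]
    intro s hs
    simp only [hC, Set.mem_compl_iff, Set.mem_setOf_eq] at hs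
    -- separate s i from the compact closed set BR i (s_{-i})
    obtain ⟨U, V, hU, hV, hsU, hBRV, hUV⟩ :=
      SeparatedNhds.of_isCompact_isCompact_isClosed (isCompact_singleton (x := s i))
        ((hclosed i _).isCompact) (hclosed i _)
        (Set.disjoint_singleton_left.mpr hs)
    refine ⟨{s' | (fun j : {j : I // j ≠ i} => s' j.1) ∈
        {p | BR i p ⊆ V} ∧ s' i ∈ U}, ?_, ?_, ?_⟩
    · intro s' hs'
      simp only [Set.mem_setOf_eq] at hs'
      simp only [Set.mem_compl_iff, Set.mem_setOf_eq]
      intro hmem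
      exact hUV.ne_of_mem hs'.2 (hs'.1 hmem) rfl
    · exact ((huhc i V hV).preimage (continuous_pi fun j => continuous_apply j.1)).inter
        ((hU.preimage (continuous_apply i)))
    · exact ⟨hBRV, hsU rfl⟩
  -- finite intersections are nonempty
  set T : Finset I → Set (∀ i, S i) := fun J => ⋂ i ∈ J, C i with hT
  have hTne : ∀ J, (T J).Nonempty := by
    intro J
    obtain ⟨t, ht⟩ := hfin J (fun j => Classical.arbitrary (S j.1))
    refine ⟨fun i => if h : i ∈ J then t ⟨i, h⟩ else Classical.arbitrary (S i), ?_⟩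
    simp only [hT, Set.mem_iInter]
    intro i hi
    simp only [hC, Set.mem_setOf_eq, dif_pos hi]
    have := ht ⟨i, hi⟩
    convert this using 2
  have hTdir : Directed (· ⊇ ·) T := by
    intro J K
    refine ⟨J ∪ K, ?_, ?_⟩ <;>
      · intro s hs
        simp only [hT, Set.mem_iInter] at hs ⊢
        intro i hi
        exact hs i (by simp [hi])
  obtain ⟨s, hsmem⟩ := IsCompact.nonempty_iInter_of_directed_nonempty_isCompact_isClosed
    T hTdir hTne (fun J => (isClosed_biInter fun i _ => hCclosed i).isCompact) (fun J => isClosed_biInter fun i _ => hCclosed i)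
  refine ⟨s, fun i => ?_⟩
  have := Set.mem_iInter.mp hsmem {i}
  simpa [hT, hC] using this
end
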